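/- For a weakly lexicographic chores-only instance with n agents, the maximin share vector of an agent equals (s(1)/n, s(2)/n, ..., ⌊s(k)/n⌋, 0, ..., 0), where k is the index of the first indifference class whose (negative) size s(k) is not divisible by n; here s(l) = −|C_l| is the negated number of chores in class l. -/
import Mathlib


/-- Strict lexicographic dominance on integer score vectors: `LexLtZ f g` means `f <_lex g`. -/
def LexLtZ {k : ℕ} (f g : Fin k → ℤ) : Prop :=
  ∃ j : Fin k, f j < g j ∧ ∀ i : Fin k, i < j → f i = g i

/-- Weak lexicographic dominance on integer score vectors. -/
def LexLeZ {k : ℕ} (f g : Fin k → ℤ) : Prop := f = g ∨ LexLtZ f g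

/-- Score vector of a bundle `X` of chores, given indifference classes `cls`
(class `0` is the most important, i.e. worst, chores); coordinates are negated counts. -/
def cscore {m k : ℕ} (cls : Fin m → Fin k) (X : Finset (Fin m)) : Fin k → ℤ :=
  fun l => -(((X.filter fun a => cls a = l).card : ℤ))

/-- An `n`-partition of the items `Fin m`: every item belongs to exactly one bundle. -/
def IsPartition {n m : ℕ} (A : Fin n → Finset (Fin m)) : Prop :=
  ∀ c : Fin m, ∃! i : Fin n, c ∈ A i

lemma count_mod (n j : ℕ) (hn : 0 < n) (hj : j < n) (N : ℕ) :
    ((Finset.range N).filter (fun r => r % n = j)).card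
      = N / n + if j < N % n then 1 else 0 := by
  induction N with
  | zero => simp
  | succ N ih =>
    rw [Finset.range_add_one, Finset.filter_insert]
    have hr : N % n < n := Nat.mod_lt _ hn
    by_cases h2 : N % n + 1 < n
    · have key : (N+1) / n = N / n ∧ (N+1) % n = N % n + 1 :=
        (Nat.div_mod_unique hn).2 ⟨by have := Nat.div_add_mod N n; omega, h2⟩
      by_cases h : N % n = j
      · rw [if_pos h, Finset.card_insert_of_notMem (by simp), ih]
        rw [key.1, key.2]
        split_ifs <;> omega
      · rw [if_neg h, ih, key.1, key.2]
        split_ifs <;> omega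
    · have hrn : N % n + 1 = n := by omega
      have key : (N+1) / n = N / n + 1 ∧ (N+1) % n = 0 :=
        (Nat.div_mod_unique hn).2 ⟨by have := Nat.div_add_mod N n; ring_nf; omega, hn⟩
      by_cases h : N % n = j
      · rw [if_pos h, Finset.card_insert_of_notMem (by simp), ih]
        rw [key.1, key.2]
        split_ifs <;> omega
      · rw [if_neg h, ih, key.1, key.2]
        split_ifs <;> omega

def rnk {m K : ℕ} (cls : Fin m → Fin K) (a : Fin m) : ℕ :=
  (Finset.univ.filter (fun b => cls b = cls a ∧ b < a)).card

lemma rnk_lt {m K : ℕ} (cls : Fin m → Fin K) (a : Fin m) :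
    rnk cls a < (Finset.univ.filter (fun b => cls b = cls a)).card := by
  apply Finset.card_lt_card
  have hsub : Finset.univ.filter (fun b => cls b = cls a ∧ b < a)
      ⊆ Finset.univ.filter (fun b => cls b = cls a) := by
    intro b hb
    simp only [Finset.mem_filter, Finset.mem_univ, true_and] at *
    exact hb.1
  rw [Finset.ssubset_iff_of_subset hsub]
  exact ⟨a, by simp, by simp⟩

lemma rnk_strict {m K : ℕ} (cls : Fin m → Fin K) {a b : Fin m}
    (hcls : cls a = cls b) (hab : a < b) : rnk cls a < rnk cls b := by
  apply Finset.card_lt_card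
  rw [Finset.ssubset_iff_of_subset]
  · exact ⟨a, by simp [hcls.symm, hab], by simp⟩
  · intro x hx
    simp only [Finset.mem_filter, Finset.mem_univ, true_and] at *
    exact ⟨hx.1.trans hcls, hx.2.trans hab⟩

lemma rnk_inj {m K : ℕ} (cls : Fin m → Fin K) {a b : Fin m}
    (hcls : cls a = cls b) (h : rnk cls a = rnk cls b) : a = b := by
  rcases lt_trichotomy a b with h1 | h1 | h1
  · exact absurd h (Nat.ne_of_lt (rnk_strict cls hcls h1))
  · exact h1
  · exact absurd h.symm (Nat.ne_of_lt (rnk_strict cls hcls.symm h1))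

lemma rnk_card {m K : ℕ} (cls : Fin m → Fin K) (l : Fin K) (P : ℕ → Prop) [DecidablePred P] :
    ((Finset.univ.filter (fun a => cls a = l)).filter (fun a => P (rnk cls a))).card
      = ((Finset.range ((Finset.univ.filter (fun a => cls a = l)).card)).filter P).card := by
  have hmap : ∀ a ∈ Finset.univ.filter (fun a : Fin m => cls a = l),
      rnk cls a ∈ Finset.range ((Finset.univ.filter (fun a => cls a = l)).card) := by
    intro a ha
    simp only [Finset.mem_filter, Finset.mem_univ, true_and] at ha
    rw [Finset.mem_range]
    have := rnk_lt cls a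
    rwa [ha] at this
  have hinj : ∀ a₁ a₂, a₁ ∈ Finset.univ.filter (fun a : Fin m => cls a = l) →
      a₂ ∈ Finset.univ.filter (fun a : Fin m => cls a = l) → rnk cls a₁ = rnk cls a₂ → a₁ = a₂ := by
    intro a₁ a₂ h₁ h₂ h
    simp only [Finset.mem_filter, Finset.mem_univ, true_and] at h₁ h₂
    exact rnk_inj cls (h₁.trans h₂.symm) h
  apply Finset.card_bij (fun a _ => rnk cls a)
  · intro a ha
    obtain ⟨ha1, ha2⟩ := Finset.mem_filter.mp ha
    exact Finset.mem_filter.mpr ⟨hmap a ha1, ha2⟩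
  · intro a₁ h₁ a₂ h₂ h
    exact hinj a₁ a₂ (Finset.mem_filter.mp h₁).1 (Finset.mem_filter.mp h₂).1 h
  · intro r hr
    obtain ⟨hr1, hr2⟩ := Finset.mem_filter.mp hr
    obtain ⟨a, ha, har⟩ := Finset.surj_on_of_inj_on_of_card_le
      (s := Finset.univ.filter (fun a : Fin m => cls a = l))
      (fun a _ => rnk cls a) hmap (fun a₁ a₂ h₁ h₂ => hinj a₁ a₂ h₁ h₂)
      (by rw [Finset.card_range]) r hr1
    exact ⟨a, Finset.mem_filter.mpr ⟨ha, by rw [← har]; exact hr2⟩, har.symm⟩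

lemma lex_total {K : ℕ} (f g : Fin K → ℤ) : LexLeZ f g ∨ LexLtZ g f := by
  by_cases h : f = g
  · exact Or.inl (Or.inl h)
  · have hne : (Finset.univ.filter (fun i => f i ≠ g i)).Nonempty := by
      rw [Finset.filter_nonempty_iff]
      by_contra hc
      push_neg at hc
      exact h (funext fun i => by have := hc i (Finset.mem_univ i); tauto)
    set T := Finset.univ.filter (fun i => f i ≠ g i) with hT
    set j := T.min' hne with hj
    have hjT : j ∈ T := T.min'_mem hne
    have hjne : f j ≠ g j := by
      rw [hT] at hjT; simpa using hjT
    have hbefore : ∀ i, i < j → f i = g i := by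
      intro i hi
      by_contra hc
      have : i ∈ T := by rw [hT]; simpa using hc
      exact absurd (T.min'_le i this) (by omega)
    rcases lt_or_gt_of_ne hjne with h1 | h1
    · exact Or.inl (Or.inr ⟨j, h1, hbefore⟩)
    · exact Or.inr ⟨j, h1, fun i hi => (hbefore i hi).symm⟩

lemma int_div_neg_dvd (c n : ℕ) (hn : 0 < n) (h : n ∣ c) :
    (-(c:ℤ)) / (n:ℤ) = -((c / n : ℕ) : ℤ) := by
  obtain ⟨q, rfl⟩ := h
  have hne : (n:ℤ) ≠ 0 := by exact_mod_cast hn.ne'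
  rw [Nat.mul_div_cancel_left _ hn]
  push_cast
  rw [show -((n:ℤ) * q) = (n:ℤ) * (-q) by ring, Int.mul_ediv_cancel_left _ hne]

lemma int_fdiv_neg_not_dvd (c n : ℕ) (hn : 0 < n) (h : ¬ n ∣ c) :
    Int.fdiv (-(c:ℤ)) (n:ℤ) = -((c / n : ℕ) : ℤ) - 1 := by
  rw [Int.fdiv_eq_ediv_of_nonneg _ (by positivity)]
  have hmod := Nat.div_add_mod c n
  have hr0 : 0 < c % n := Nat.pos_of_ne_zero (fun hh => h (Nat.dvd_of_mod_eq_zero hh))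
  have hrn : c % n < n := Nat.mod_lt _ hn
  have key : (-(c:ℤ)) = ((n:ℤ) - ((c % n : ℕ):ℤ)) + (-((c/n : ℕ):ℤ) - 1) * (n:ℤ) := by
    have : (n:ℤ) * ((c/n : ℕ):ℤ) + ((c % n : ℕ):ℤ) = (c:ℤ) := by exact_mod_cast hmod
    linarith
  rw [key, Int.add_mul_ediv_right _ _ (by exact_mod_cast hn.ne' : (n:ℤ) ≠ 0),
    Int.ediv_eq_zero_of_lt (by push_cast; omega) (by push_cast; omega)]
  ring

/-- closed form for the maximin share in a weakly lexicographic chores-only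
instance with `n` agents: `MMS = (s(1)/n, …, ⌊s(k)/n⌋, 0, …, 0)` where `k` is the first
class whose size is not divisible by `n` (and `⌊·⌋` is the floor of the negated count
divided by `n`).  Being the MMS vector is expressed by: some partition has every bundle
weakly above `x`, and every partition has a bundle weakly below `x`. -/
theorem stmt4 {n m K : ℕ} (hn : 0 < n) (cls : Fin m → Fin K)
    (c : Fin K → ℕ) (hc : ∀ l : Fin K, c l = (Finset.univ.filter fun a => cls a = l).card)
    (k : Fin K) (hk1 : ∀ l : Fin K, l < k → n ∣ c l) (hk2 : ¬ n ∣ c k)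
    (x : Fin K → ℤ)
    (hx : ∀ l : Fin K, x l =
      if l < k then (-(c l : ℤ)) / (n : ℤ)
      else if l = k then Int.fdiv (-(c l : ℤ)) (n : ℤ)
      else 0) :
    (∃ A : Fin n → Finset (Fin m), IsPartition A ∧
      ∀ j : Fin n, LexLeZ x (cscore cls (A j))) ∧
    (∀ A : Fin n → Finset (Fin m), IsPartition A →
      ∃ j : Fin n, LexLeZ (cscore cls (A j)) x) := by
  classical
  have hxlt : ∀ l, l < k → x l = -((c l / n : ℕ) : ℤ) := by
    intro l hl
    rw [hx l, if_pos hl]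
    exact int_div_neg_dvd _ _ hn (hk1 l hl)
  have hxk : x k = -((c k / n : ℕ) : ℤ) - 1 := by
    rw [hx k, if_neg (lt_irrefl k), if_pos rfl]
    exact int_fdiv_neg_not_dvd _ _ hn hk2
  have hxgt : ∀ l, k < l → x l = 0 := by
    intro l hl
    rw [hx l, if_neg (by omega), if_neg (by omega)]
  have hr0 : 0 < c k % n := Nat.pos_of_ne_zero (fun hh => hk2 (Nat.dvd_of_mod_eq_zero hh))
  have hrn : c k % n < n := Nat.mod_lt _ hn
  have hmod0 : ∀ l, l < k → c l % n = 0 := by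
    intro l hl
    obtain ⟨q, hq⟩ := hk1 l hl
    simp [hq, Nat.mul_mod_right]
  constructor
  · -- PART 1 : construction
    set f : Fin m → Fin n := fun a =>
      if k < cls a then ⟨n - 1, by omega⟩ else ⟨rnk cls a % n, Nat.mod_lt _ hn⟩ with hf
    refine ⟨fun j => Finset.univ.filter (fun a => f a = j), ?_, ?_⟩
    · intro a
      refine ⟨f a, by simp, ?_⟩
      intro y hy
      simp only [Finset.mem_filter, Finset.mem_univ, true_and] at hy
      exact hy.symm
    intro j
    have hcnt : ∀ l : Fin K,
        (((Finset.univ.filter (fun a => f a = j)).filter (fun a => cls a = l)).card)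
          = if l ≤ k then c l / n + (if j.val < c l % n then 1 else 0)
            else (if j.val = n - 1 then c l else 0) := by
      intro l
      have hswap : (Finset.univ.filter (fun a => f a = j)).filter (fun a => cls a = l)
          = (Finset.univ.filter (fun a => cls a = l)).filter (fun a => f a = j) := by
        ext a
        simp only [Finset.mem_filter, Finset.mem_univ, true_and]
        tauto
      rw [hswap]
      by_cases hlk : l ≤ k
      · rw [if_pos hlk]
        have heq : (Finset.univ.filter (fun a => cls a = l)).filter (fun a => f a = j)
            = (Finset.univ.filter (fun a => cls a = l)).filter
                (fun a => rnk cls a % n = j.val) := by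
          apply Finset.filter_congr
          intro a ha
          simp only [Finset.mem_filter, Finset.mem_univ, true_and] at ha
          rw [hf]
          simp only []
          rw [if_neg (by rw [ha]; exact not_lt.mpr hlk)]
          constructor
          · intro hh; rw [← hh]
          · intro hh; exact Fin.ext hh
        rw [heq, rnk_card cls l (fun t => t % n = j.val), ← hc l,
          count_mod n j.val hn j.isLt (c l)]
      · rw [if_neg hlk]
        have hkl : k < l := lt_of_not_ge hlk
        by_cases hj : j.val = n - 1
        · rw [if_pos hj]
          rw [Finset.filter_true_of_mem, ← hc l]
          intro a ha
          simp only [Finset.mem_filter, Finset.mem_univ, true_and] at ha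
          rw [hf]
          simp only []
          rw [if_pos (by rw [ha]; exact hkl)]
          exact Fin.ext (by simp [hj])
        · rw [if_neg hj]
          rw [Finset.filter_false_of_mem, Finset.card_empty]
          intro a ha
          simp only [Finset.mem_filter, Finset.mem_univ, true_and] at ha
          rw [hf]
          simp only []
          rw [if_pos (by rw [ha]; exact hkl)]
          intro hh
          exact hj (by rw [← hh])
    by_cases hjr : j.val < c k % n
    · left
      funext l
      simp only [cscore]
      rw [hcnt l]
      rcases lt_trichotomy l k with hl | hl | hl
      · rw [if_pos (le_of_lt hl), hxlt l hl, hmod0 l hl, if_neg (by omega)]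
        push_cast; ring
      · subst hl
        rw [if_pos le_rfl, if_pos hjr, hxk]
        push_cast; ring
      · rw [if_neg (not_le.mpr hl), if_neg (by omega), hxgt l hl]
        simp
    · right
      refine ⟨k, ?_, ?_⟩
      · simp only [cscore]
        rw [hcnt k, if_pos le_rfl, if_neg hjr, hxk]
        push_cast; omega
      · intro i hi
        simp only [cscore]
        rw [hcnt i, if_pos (le_of_lt hi), hxlt i hi, hmod0 i hi, if_neg (by omega)]
        push_cast; ring
  · -- PART 2 : upper bound
    intro A hA
    by_contra hcon
    push_neg at hcon
    have hall : ∀ j, LexLtZ x (cscore cls (A j)) := by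
      intro j
      rcases lex_total (cscore cls (A j)) x with h1 | h1
      · exact absurd h1 (hcon j)
      · exact h1
    have hsum : ∀ l, ∑ j : Fin n, ((A j).filter (fun a => cls a = l)).card = c l := by
      intro l
      have h1 : ∀ j : Fin n, ((A j).filter (fun a => cls a = l)).card
          = ∑ b ∈ Finset.univ.filter (fun a => cls a = l), if b ∈ A j then 1 else 0 := by
        intro j
        rw [← Finset.card_filter]
        congr 1
        ext b
        simp only [Finset.mem_filter, Finset.mem_univ, true_and]
        tauto
      calc ∑ j : Fin n, ((A j).filter (fun a => cls a = l)).card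
          = ∑ j : Fin n, ∑ b ∈ Finset.univ.filter (fun a => cls a = l),
              if b ∈ A j then 1 else 0 := Finset.sum_congr rfl (fun j _ => h1 j)
        _ = ∑ b ∈ Finset.univ.filter (fun a => cls a = l), ∑ j : Fin n,
              if b ∈ A j then 1 else 0 := Finset.sum_comm
        _ = ∑ b ∈ Finset.univ.filter (fun a => cls a = l), 1 := by
              apply Finset.sum_congr rfl
              intro b _
              obtain ⟨i0, hi0, hu⟩ := hA b
              rw [← Finset.card_filter]
              have : Finset.univ.filter (fun j => b ∈ A j) = {i0} := by
                ext j
                simp only [Finset.mem_filter, Finset.mem_univ, true_and,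
                  Finset.mem_singleton]
                exact ⟨fun hh => hu j hh, fun hh => hh ▸ hi0⟩
              rw [this, Finset.card_singleton]
        _ = c l := by rw [Finset.sum_const, smul_eq_mul, mul_one, ← hc l]
    choose w hw1 hw2 using hall
    have hscore : ∀ j l, cscore cls (A j) l = -(((A j).filter (fun a => cls a = l)).card : ℤ) :=
      fun j l => rfl
    have hwk : ∀ j, w j ≤ k := by
      intro j
      by_contra hc'
      push_neg at hc'
      have h1 := hw1 j
      rw [hxgt _ hc', hscore] at h1
      omega
    obtain ⟨j0, -, hmin0⟩ := Finset.exists_min_image Finset.univ w ⟨⟨0, hn⟩, Finset.mem_univ _⟩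
    have hmin : ∀ j, w j0 ≤ w j := fun j => hmin0 j (Finset.mem_univ j)
    set L := w j0 with hj0
    have hLk : L ≤ k := hwk j0
    rcases lt_or_eq_of_le hLk with hLlt | hLeq
    · -- L < k : n ∣ c L
      have hxL : x L = -((c L / n : ℕ) : ℤ) := hxlt L hLlt
      have hub : ∀ j, ((A j).filter (fun a => cls a = L)).card ≤ c L / n := by
        intro j
        rcases eq_or_lt_of_le (hmin j) with he | hlt
        · have h1 := hw1 j
          rw [← he, hxL, hscore] at h1
          omega
        · have h1 := hw2 j L hlt
          rw [hxL, hscore] at h1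
          omega
      have hstrict : ((A j0).filter (fun a => cls a = L)).card < c L / n := by
        have h1 := hw1 j0
        rw [← hj0, hxL, hscore] at h1
        omega
      have hlt2 : ∑ j : Fin n, ((A j).filter (fun a => cls a = L)).card
          < ∑ j : Fin n, c L / n :=
        Finset.sum_lt_sum (fun j _ => hub j) ⟨j0, Finset.mem_univ _, hstrict⟩
      rw [hsum L, Finset.sum_const, Finset.card_univ, Fintype.card_fin,
        smul_eq_mul, Nat.mul_div_cancel' (hk1 L hLlt)] at hlt2
      exact lt_irrefl _ hlt2
    · -- L = k
      have hwj : ∀ j, w j = k := fun j => le_antisymm (hwk j) (hLeq ▸ hmin j)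
      have hub : ∀ j, ((A j).filter (fun a => cls a = k)).card ≤ c k / n := by
        intro j
        have h1 := hw1 j
        rw [hwj j, hxk, hscore] at h1
        omega
      have hle2 : ∑ j : Fin n, ((A j).filter (fun a => cls a = k)).card
          ≤ ∑ j : Fin n, c k / n := Finset.sum_le_sum (fun j _ => hub j)
      rw [hsum k, Finset.sum_const, Finset.card_univ, Fintype.card_fin,
        smul_eq_mul] at hle2
      have := Nat.div_add_mod (c k) n
      omega
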